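/- Let $h : \mathbb{R}^n \to \mathbb{R}^n$ be a $C^1$ diffeomorphism whose Jacobian matrix $Dh(x)$ at every point $x$ has exactly one nonzero entry per row, with the position of the nonzero entries given by a fixed permutation $\sigma$ independent of $x$ (and $\mathbb{R}^n$ connected). Then $h$ decomposes component-wise: there exist $C^1$ functions $h_1, \dots, h_n : \mathbb{R} \to \mathbb{R}$, each with nowhere-vanishing derivative, such that $h(x)_i = h_i(x_{\sigma(i)})$ for all $x$. -/

import Mathlib

/-! Each component `x ↦ h x i` has vanishing partial derivatives in every direction except
`σ i`, so by the mean value theorem along segments it depends on `x (σ i)` alone. The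
one-variable function `t ↦ h (Pi.single (σ i) t) i` is then the required component, and its
derivative is the nonzero Jacobian entry. -/

section

variable {ι F : Type*} [Fintype ι] [DecidableEq ι]

theorem LinearMap.apply_eq_smul_apply_single {R M : Type*} [CommSemiring R] [AddCommMonoid M]
    [Module R M] (f : (ι → R) →ₗ[R] M) {k : ι} (hf : ∀ j ≠ k, f (Pi.single j 1) = 0)
    (v : ι → R) : f v = v k • f (Pi.single k 1) := by
  conv_lhs => rw [pi_eq_sum_univ' v, map_sum]
  refine (Finset.sum_eq_single k (fun j _ hj => ?_) (by simp)).trans (map_smul ..)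
  rw [map_smul, hf j hj, smul_zero]

variable [NormedAddCommGroup F] [NormedSpace ℝ F]

theorem eq_of_fderiv_single_eq_zero {g : (ι → ℝ) → F} {k : ι} (hg : Differentiable ℝ g)
    (hg' : ∀ z, ∀ j ≠ k, fderiv ℝ g z (Pi.single j 1) = 0) {x y : ι → ℝ} (hxy : x k = y k) :
    g x = g y := by
  have hline (t : ℝ) : HasDerivAt (fun t : ℝ => g (x + t • (y - x))) 0 t := by
    have hpath : HasDerivAt (fun t : ℝ => x + t • (y - x)) (y - x) t := by
      simpa using ((hasDerivAt_id t).smul_const (y - x)).const_add x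
    have hzero : fderiv ℝ g (x + t • (y - x)) (y - x) = 0 := by
      rw [← ContinuousLinearMap.coe_coe,
        LinearMap.apply_eq_smul_apply_single _ (hg' (x + t • (y - x)))]
      simp [hxy]
    simpa [hzero, Function.comp_def] using (hg _).hasFDerivAt.comp_hasDerivAt t hpath
  simpa using is_const_of_deriv_eq_zero (fun t => (hline t).differentiableAt)
    (fun t => (hline t).deriv) 0 1

theorem hasDerivAt_comp_single {g : (ι → ℝ) → F} {k : ι} {t : ℝ}
    (hg : DifferentiableAt ℝ g (Pi.single k t)) :
    HasDerivAt (fun s => g (Pi.single k s)) (fderiv ℝ g (Pi.single k t) (Pi.single k 1)) t :=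
  hg.hasFDerivAt.comp_hasDerivAt t (hasDerivAt_single k t)

end

theorem stmt_18_general (n : ℕ) (h : (Fin n → ℝ) → (Fin n → ℝ))
    (hh : ContDiff ℝ 1 h)
    (σ : Equiv.Perm (Fin n))
    (hjac : ∀ x : Fin n → ℝ, ∀ i : Fin n,
      fderiv ℝ h x (Pi.single (σ i) 1) i ≠ 0 ∧
        ∀ j : Fin n, j ≠ σ i → fderiv ℝ h x (Pi.single j 1) i = 0) :
    ∃ hcomp : Fin n → ℝ → ℝ,
      (∀ i, ContDiff ℝ 1 (hcomp i)) ∧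
        (∀ i t, deriv (hcomp i) t ≠ 0) ∧
          ∀ (x : Fin n → ℝ) (i : Fin n), h x i = hcomp i (x (σ i)) := by
  have hdiff : Differentiable ℝ h := hh.differentiable one_ne_zero
  have hdiff_apply (i : Fin n) : Differentiable ℝ (fun x => h x i) := differentiable_pi.mp hdiff i
  have hfderiv_apply (i : Fin n) (z v : Fin n → ℝ) :
      fderiv ℝ (fun x => h x i) z v = fderiv ℝ h z v i := by
    rw [fderiv_apply (hdiff z)]
    rfl
  refine ⟨fun i t => h (Pi.single (σ i) t) i, fun i => ?_, fun i t => ?_, fun x i => ?_⟩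
  · exact contDiff_pi.mp (hh.comp (contDiff_single (fun _ => ℝ) 1 (σ i))) i
  · rw [(hasDerivAt_comp_single (hdiff_apply i _)).deriv, hfderiv_apply]
    exact (hjac _ i).1
  · show h x i = h (Pi.single (σ i) (x (σ i))) i
    refine eq_of_fderiv_single_eq_zero (k := σ i) (hdiff_apply i) (fun z j hj => ?_) (by simp)
    rw [hfderiv_apply]
    exact (hjac z i).2 j hj

theorem stmt_18 (n : ℕ) (h hinv : (Fin n → ℝ) → (Fin n → ℝ))
    (hh : ContDiff ℝ 1 h) (hhinv : ContDiff ℝ 1 hinv)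
    (hl : Function.LeftInverse hinv h) (hr : Function.RightInverse hinv h)
    (σ : Equiv.Perm (Fin n))
    (hjac : ∀ x : Fin n → ℝ, ∀ i : Fin n,
      fderiv ℝ h x (Pi.single (σ i) 1) i ≠ 0 ∧
        ∀ j : Fin n, j ≠ σ i → fderiv ℝ h x (Pi.single j 1) i = 0) :
    ∃ hcomp : Fin n → ℝ → ℝ,
      (∀ i, ContDiff ℝ 1 (hcomp i)) ∧
        (∀ i t, deriv (hcomp i) t ≠ 0) ∧
          ∀ (x : Fin n → ℝ) (i : Fin n), h x i = hcomp i (x (σ i)) :=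
  stmt_18_general n h hh σ hjac
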